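/- For every integer k ≥ 2, every forcing set of the diamond-necklace N_k has cardinality at least k + 2. -/
import Mathlib


/-- A set `T` of (colored) vertices is closed under the forcing rule: whenever a colored
vertex `v ∈ T` has the property that all of its neighbors outside `T` are equal to `w`
(i.e. `w` is its unique non-colored neighbor, if `w ∉ T`), then `w ∈ T`. -/
def ForcingClosed {V : Type*} (G : SimpleGraph V) (T : Set V) : Prop :=
  ∀ v ∈ T, ∀ w, G.Adj v w → (∀ u, G.Adj v u → u ∉ T → u = w) → w ∈ T

/-- `S` is a (zero) forcing set of `G`: iterating the forcing process starting from `S`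
colors all vertices; equivalently, every forcing-closed superset of `S` is everything. -/
def IsForcingSet {V : Type*} (G : SimpleGraph V) (S : Set V) : Prop :=
  ∀ T : Set V, S ⊆ T → ForcingClosed G T → ∀ v, v ∈ T

/-- `S` is a total forcing set of `G`: a forcing set whose induced subgraph has no
isolated vertex. -/
def IsTotalForcingSet {V : Type*} (G : SimpleGraph V) (S : Set V) : Prop :=
  IsForcingSet G S ∧ ∀ v ∈ S, ∃ w ∈ S, G.Adj v w

/-- The forcing number `F(G)`: minimum cardinality of a forcing set. -/
noncomputable def forcingNumber {V : Type*} (G : SimpleGraph V) : ℕ :=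
  sInf {n : ℕ | ∃ S : Set V, IsForcingSet G S ∧ S.ncard = n}

/-- The total forcing number `F_t(G)`: minimum cardinality of a total forcing set. -/
noncomputable def totalForcingNumber {V : Type*} (G : SimpleGraph V) : ℕ :=
  sInf {n : ℕ | ∃ S : Set V, IsTotalForcingSet G S ∧ S.ncard = n}

/-- The diamond-necklace `N_k`.  Its vertices are pairs `(i, j)` with `i : Fin k`
indexing the diamond and `j : Fin 4` the position inside diamond `D_i`, where
`j = 0, 1, 2, 3` correspond to the vertices `a_i, b_i, c_i, d_i` respectively and
`a_i b_i` is the missing edge of the diamond.  Two vertices in the same diamond are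
adjacent unless they are `a_i` and `b_i`, and in addition `a_i` is joined to `b_{i+1}`
(indices modulo `k`). -/
def diamondNecklace (k : ℕ) : SimpleGraph (Fin k × Fin 4) :=
  SimpleGraph.fromRel (fun p q =>
    (p.1 = q.1 ∧ ¬ ((p.2 = 0 ∧ q.2 = 1) ∨ (p.2 = 1 ∧ q.2 = 0))) ∨
    ((q.1 : ℕ) = ((p.1 : ℕ) + 1) % k ∧ p.2 = 0 ∧ q.2 = 1))

section Aux
variable {k : ℕ}

lemma dn_adj_within (i : Fin k) {j j' : Fin 4} (h : j ≠ j')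
    (h2 : ¬ (j = 0 ∧ j' = 1)) (h3 : ¬ (j = 1 ∧ j' = 0)) :
    (diamondNecklace k).Adj (i, j) (i, j') := by
  unfold diamondNecklace
  rw [SimpleGraph.fromRel_adj]
  refine ⟨fun hc => h (congrArg Prod.snd hc), Or.inl (Or.inl ⟨rfl, ?_⟩)⟩
  rintro (⟨ha, hb⟩ | ⟨ha, hb⟩)
  exacts [h2 ⟨ha, hb⟩, h3 ⟨ha, hb⟩]

lemma dn_adj_cross (i i' : Fin k) (h : (i' : ℕ) = ((i : ℕ) + 1) % k) :
    (diamondNecklace k).Adj (i, 0) (i', 1) := by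
  unfold diamondNecklace
  rw [SimpleGraph.fromRel_adj]
  refine ⟨fun hc => ?_, Or.inl (Or.inr ⟨h, rfl, rfl⟩)⟩
  have : (0 : Fin 4) = 1 := congrArg Prod.snd hc
  exact absurd this (by decide)

lemma dn_adj_two_iff (p : Fin k × Fin 4) (i : Fin k) :
    (diamondNecklace k).Adj p (i, 2) ↔ p.1 = i ∧ p.2 ≠ 2 := by
  unfold diamondNecklace
  rw [SimpleGraph.fromRel_adj]
  constructor
  · rintro ⟨hne, h | h⟩
    · rcases h with ⟨h1, -⟩ | ⟨-, -, hc⟩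
      · exact ⟨h1, fun h2 => hne (Prod.ext h1 h2)⟩
      · exact absurd hc (by simp)
    · rcases h with ⟨h1, -⟩ | ⟨-, hc, -⟩
      · exact ⟨h1.symm, fun h2 => hne (Prod.ext h1.symm h2)⟩
      · exact absurd hc (by simp)
  · rintro ⟨h1, h2⟩
    refine ⟨fun hc => h2 (congrArg Prod.snd hc), Or.inl (Or.inl ⟨h1, ?_⟩)⟩
    rintro (⟨-, hc⟩ | ⟨-, hc⟩) <;> exact absurd hc (by simp)

lemma dn_adj_three_iff (p : Fin k × Fin 4) (i : Fin k) :
    (diamondNecklace k).Adj p (i, 3) ↔ p.1 = i ∧ p.2 ≠ 3 := by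
  unfold diamondNecklace
  rw [SimpleGraph.fromRel_adj]
  constructor
  · rintro ⟨hne, h | h⟩
    · rcases h with ⟨h1, -⟩ | ⟨-, -, hc⟩
      · exact ⟨h1, fun h2 => hne (Prod.ext h1 h2)⟩
      · exact absurd hc (by simp)
    · rcases h with ⟨h1, -⟩ | ⟨-, hc, -⟩
      · exact ⟨h1.symm, fun h2 => hne (Prod.ext h1.symm h2)⟩
      · exact absurd hc (by simp)
  · rintro ⟨h1, h2⟩
    refine ⟨fun hc => h2 (congrArg Prod.snd hc), Or.inl (Or.inl ⟨h1, ?_⟩)⟩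
    rintro (⟨-, hc⟩ | ⟨-, hc⟩) <;> exact absurd hc (by simp)

end Aux

/-- For every `k ≥ 2`, every forcing set of the diamond-necklace `N_k` has cardinality
at least `k + 2`. -/
theorem forcingSet_diamondNecklace_card_lower_bound (k : ℕ) (hk : 2 ≤ k)
    (S : Set (Fin k × Fin 4)) (hS : IsForcingSet (diamondNecklace k) S) :
    k + 2 ≤ S.ncard := by
  classical
  by_contra hlt
  push_neg at hlt
  have hcard : S.ncard ≤ k + 1 := by omega
  by_cases hA : ∃ i : Fin k, (i, (2 : Fin 4)) ∉ S ∧ (i, (3 : Fin 4)) ∉ S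
  · obtain ⟨i, h2, h3⟩ := hA
    have hsub : S ⊆ {p | p ≠ (i, 2) ∧ p ≠ (i, 3)} := by
      intro p hp
      exact ⟨fun hc => h2 (hc ▸ hp), fun hc => h3 (hc ▸ hp)⟩
    have hclosed : ForcingClosed (diamondNecklace k) {p | p ≠ (i, 2) ∧ p ≠ (i, 3)} := by
      intro v hv w hadj hall
      by_contra hw
      have hw' : w = (i, 2) ∨ w = (i, 3) := by
        by_contra h
        push_neg at h
        exact hw ⟨h.1, h.2⟩
      have hni2 : ((i, (2 : Fin 4)) : Fin k × Fin 4) ∉ {p : Fin k × Fin 4 | p ≠ (i, 2) ∧ p ≠ (i, 3)} :=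
        fun h => h.1 rfl
      have hni3 : ((i, (3 : Fin 4)) : Fin k × Fin 4) ∉ {p : Fin k × Fin 4 | p ≠ (i, 2) ∧ p ≠ (i, 3)} :=
        fun h => h.2 rfl
      rcases hw' with rfl | rfl
      · have h1 := (dn_adj_two_iff v i).mp hadj
        have hv3 : v.2 ≠ 3 := fun hc => hv.2 (Prod.ext h1.1 hc)
        have hadj3 : (diamondNecklace k).Adj v (i, 3) := (dn_adj_three_iff v i).mpr ⟨h1.1, hv3⟩
        have := hall (i, 3) hadj3 hni3
        exact absurd (congrArg Prod.snd this) (by simp)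
      · have h1 := (dn_adj_three_iff v i).mp hadj
        have hv2 : v.2 ≠ 2 := fun hc => hv.1 (Prod.ext h1.1 hc)
        have hadj2 : (diamondNecklace k).Adj v (i, 2) := (dn_adj_two_iff v i).mpr ⟨h1.1, hv2⟩
        have := hall (i, 2) hadj2 hni2
        exact absurd (congrArg Prod.snd this) (by simp)
    exact (hS _ hsub hclosed (i, 2)).1 rfl
  · have hA' : ∀ i : Fin k, ((i, (2 : Fin 4)) ∈ S) ∨ ((i, (3 : Fin 4)) ∈ S) := by
      intro i
      by_cases h : (i, (2 : Fin 4)) ∈ S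
      · exact Or.inl h
      · by_cases h' : (i, (3 : Fin 4)) ∈ S
        · exact Or.inr h'
        · exact absurd ⟨i, h, h'⟩ hA
    set pick : Fin k → Fin k × Fin 4 :=
      fun i => if (i, (2 : Fin 4)) ∈ S then (i, 2) else (i, 3) with hpickdef
    have hpickS : ∀ i, pick i ∈ S := by
      intro i
      simp only [hpickdef]
      split_ifs with h
      · exact h
      · exact (hA' i).resolve_left h
    have hpick1 : ∀ i, (pick i).1 = i := by
      intro i
      simp only [hpickdef]
      split_ifs <;> rfl
    have hpick2 : ∀ i, (pick i).2 = 2 ∨ (pick i).2 = 3 := by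
      intro i
      simp only [hpickdef]
      split_ifs
      · exact Or.inl rfl
      · exact Or.inr rfl
    have hinj : Function.Injective pick := by
      intro a b hab
      have := congrArg Prod.fst hab
      rwa [hpick1, hpick1] at this
    have hRsub : Set.range pick ⊆ S := by
      rintro x ⟨i, rfl⟩
      exact hpickS i
    have hRcard : (Set.range pick).ncard = k := by
      rw [← Set.image_univ, Set.ncard_image_of_injective _ hinj, Set.ncard_univ]
      simp
    have hEcard : (S \ Set.range pick).ncard ≤ 1 := by
      rw [Set.ncard_diff hRsub, hRcard]
      omega
    have huniq : ∀ x ∈ S \ Set.range pick, ∀ y ∈ S \ Set.range pick, x = y :=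
      (Set.ncard_le_one (Set.toFinite _)).mp hEcard
    have hmem : ∀ x : Fin k × Fin 4, x ∈ Set.range pick → x = pick x.1 := by
      rintro x ⟨i, rfl⟩
      rw [hpick1]
    have hex01 : ∀ x : Fin k × Fin 4, (x.2 = 0 ∨ x.2 = 1) → x ∉ Set.range pick := by
      intro x hx hr
      have hxx := hmem x hr
      rcases hpick2 x.1 with h | h <;> rcases hx with h' | h' <;>
        (rw [← hxx] at h; rw [h'] at h; exact absurd h (by simp))
    have hkill2 : ∀ x y : Fin k × Fin 4, x ∈ S → y ∈ S → (x.2 = 0 ∨ x.2 = 1) →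
        (y.2 = 0 ∨ y.2 = 1) → x = y := by
      intro x y hx hy hx2 hy2
      exact huniq x ⟨hx, hex01 x hx2⟩ y ⟨hy, hex01 y hy2⟩
    have hkill : ∀ (i : Fin k) (x : Fin k × Fin 4), x ∈ S → (x.2 = 0 ∨ x.2 = 1) →
        (i, (2 : Fin 4)) ∈ S → (i, (3 : Fin 4)) ∈ S → False := by
      intro i x hx hx2 h2 h3
      have hxex : x ∉ Set.range pick := hex01 x hx2
      have hone : ((i, (2 : Fin 4)) : Fin k × Fin 4) ∉ Set.range pick ∨
          ((i, (3 : Fin 4)) : Fin k × Fin 4) ∉ Set.range pick := by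
        by_contra h
        push_neg at h
        have e2 := hmem _ h.1
        have e3 := hmem _ h.2
        have : ((i, (2 : Fin 4)) : Fin k × Fin 4) = (i, (3 : Fin 4)) := by
          rw [e2, e3]
        exact absurd (congrArg Prod.snd this) (by simp)
      rcases hone with h | h
      · have heq := huniq _ ⟨h2, h⟩ x ⟨hx, hxex⟩
        have h2' := congrArg Prod.snd heq
        rcases hx2 with h' | h' <;> (rw [h'] at h2'; exact absurd h2' (by simp))
      · have heq := huniq _ ⟨h3, h⟩ x ⟨hx, hxex⟩
        have h2' := congrArg Prod.snd heq
        rcases hx2 with h' | h' <;> (rw [h'] at h2'; exact absurd h2' (by simp))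
    have hclosed : ForcingClosed (diamondNecklace k) S := by
      intro v hv w hadj hall
      by_contra hw
      have hget : ∀ u, (diamondNecklace k).Adj v u → u ≠ w → u ∈ S := by
        intro u hu hne
        by_contra h
        exact hne (hall u hu h)
      obtain ⟨i, j⟩ := v
      have hj : ∀ j : Fin 4, j = 0 ∨ j = 1 ∨ j = 2 ∨ j = 3 := by decide
      rcases hj j with rfl | rfl | rfl | rfl
      · -- j = 0
        set succ : Fin k := ⟨((i : ℕ) + 1) % k, Nat.mod_lt _ (by omega)⟩ with hsucc
        by_cases hs : ((succ, (1 : Fin 4)) : Fin k × Fin 4) ∈ S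
        · have := hkill2 (i, 0) (succ, 1) hv hs (Or.inl rfl) (Or.inr rfl)
          exact absurd (congrArg Prod.snd this) (by simp)
        · have hw1 : ((succ, (1 : Fin 4)) : Fin k × Fin 4) = w :=
            hall _ (dn_adj_cross i succ rfl) hs
          have h2 : ((i, (2 : Fin 4)) : Fin k × Fin 4) ∈ S := by
            apply hget _ (dn_adj_within i (by decide) (by decide) (by decide))
            rw [← hw1]
            intro hc
            exact absurd (congrArg Prod.snd hc) (by simp)
          have h3 : ((i, (3 : Fin 4)) : Fin k × Fin 4) ∈ S := by
            apply hget _ (dn_adj_within i (by decide) (by decide) (by decide))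
            rw [← hw1]
            intro hc
            exact absurd (congrArg Prod.snd hc) (by simp)
          exact hkill i (i, 0) hv (Or.inl rfl) h2 h3
      · -- j = 1
        set pred : Fin k := ⟨((i : ℕ) + (k - 1)) % k, Nat.mod_lt _ (by omega)⟩ with hpred
        have hcr : ((i : ℕ)) = ((pred : ℕ) + 1) % k := by
          have h1 : ((pred : ℕ) + 1) % k = ((i : ℕ) + (k - 1) + 1) % k := Nat.mod_add_mod _ _ _
          have h2 : (i : ℕ) + (k - 1) + 1 = (i : ℕ) + k := by omega
          rw [h1, h2, Nat.add_mod_right, Nat.mod_eq_of_lt i.isLt]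
        by_cases hs : ((pred, (0 : Fin 4)) : Fin k × Fin 4) ∈ S
        · have := hkill2 (i, 1) (pred, 0) hv hs (Or.inr rfl) (Or.inl rfl)
          exact absurd (congrArg Prod.snd this) (by simp)
        · have hw1 : ((pred, (0 : Fin 4)) : Fin k × Fin 4) = w :=
            hall _ ((dn_adj_cross pred i hcr).symm) hs
          have h2 : ((i, (2 : Fin 4)) : Fin k × Fin 4) ∈ S := by
            apply hget _ (dn_adj_within i (by decide) (by decide) (by decide))
            rw [← hw1]
            intro hc
            exact absurd (congrArg Prod.snd hc) (by simp)
          have h3 : ((i, (3 : Fin 4)) : Fin k × Fin 4) ∈ S := by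
            apply hget _ (dn_adj_within i (by decide) (by decide) (by decide))
            rw [← hw1]
            intro hc
            exact absurd (congrArg Prod.snd hc) (by simp)
          exact hkill i (i, 1) hv (Or.inr rfl) h2 h3
      · -- j = 2
        by_cases h0 : ((i, (0 : Fin 4)) : Fin k × Fin 4) ∈ S
        · by_cases h1 : ((i, (1 : Fin 4)) : Fin k × Fin 4) ∈ S
          · have := hkill2 (i, 0) (i, 1) h0 h1 (Or.inl rfl) (Or.inr rfl)
            exact absurd (congrArg Prod.snd this) (by simp)
          · have hw1 : ((i, (1 : Fin 4)) : Fin k × Fin 4) = w :=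
              hall _ (dn_adj_within i (by decide) (by decide) (by decide)) h1
            have h3 : ((i, (3 : Fin 4)) : Fin k × Fin 4) ∈ S := by
              apply hget _ (dn_adj_within i (by decide) (by decide) (by decide))
              rw [← hw1]
              intro hc
              exact absurd (congrArg Prod.snd hc) (by simp)
            exact hkill i (i, 0) h0 (Or.inl rfl) hv h3
        · have hw0 : ((i, (0 : Fin 4)) : Fin k × Fin 4) = w :=
            hall _ (dn_adj_within i (by decide) (by decide) (by decide)) h0
          have h1 : ((i, (1 : Fin 4)) : Fin k × Fin 4) ∈ S := by
            apply hget _ (dn_adj_within i (by decide) (by decide) (by decide))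
            rw [← hw0]
            intro hc
            exact absurd (congrArg Prod.snd hc) (by simp)
          have h3 : ((i, (3 : Fin 4)) : Fin k × Fin 4) ∈ S := by
            apply hget _ (dn_adj_within i (by decide) (by decide) (by decide))
            rw [← hw0]
            intro hc
            exact absurd (congrArg Prod.snd hc) (by simp)
          exact hkill i (i, 1) h1 (Or.inr rfl) hv h3
      · -- j = 3
        by_cases h0 : ((i, (0 : Fin 4)) : Fin k × Fin 4) ∈ S
        · by_cases h1 : ((i, (1 : Fin 4)) : Fin k × Fin 4) ∈ S
          · have := hkill2 (i, 0) (i, 1) h0 h1 (Or.inl rfl) (Or.inr rfl)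
            exact absurd (congrArg Prod.snd this) (by simp)
          · have hw1 : ((i, (1 : Fin 4)) : Fin k × Fin 4) = w :=
              hall _ (dn_adj_within i (by decide) (by decide) (by decide)) h1
            have h2 : ((i, (2 : Fin 4)) : Fin k × Fin 4) ∈ S := by
              apply hget _ (dn_adj_within i (by decide) (by decide) (by decide))
              rw [← hw1]
              intro hc
              exact absurd (congrArg Prod.snd hc) (by simp)
            exact hkill i (i, 0) h0 (Or.inl rfl) h2 hv
        · have hw0 : ((i, (0 : Fin 4)) : Fin k × Fin 4) = w :=
            hall _ (dn_adj_within i (by decide) (by decide) (by decide)) h0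
          have h1 : ((i, (1 : Fin 4)) : Fin k × Fin 4) ∈ S := by
            apply hget _ (dn_adj_within i (by decide) (by decide) (by decide))
            rw [← hw0]
            intro hc
            exact absurd (congrArg Prod.snd hc) (by simp)
          have h2 : ((i, (2 : Fin 4)) : Fin k × Fin 4) ∈ S := by
            apply hget _ (dn_adj_within i (by decide) (by decide) (by decide))
            rw [← hw0]
            intro hc
            exact absurd (congrArg Prod.snd hc) (by simp)
          exact hkill i (i, 1) h1 (Or.inr rfl) h2 hv
    have hallS := hS S subset_rfl hclosed
    have hU : S = Set.univ := Set.eq_univ_of_forall hallS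
    have hBig : S.ncard = k * 4 := by
      rw [hU, Set.ncard_univ, Nat.card_eq_fintype_card]
      simp
    omega
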